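/- arXiv:1312.2896 — 9 statements merged into one kernel-verified Lean document; each statement's English description precedes it below -/
import Mathlib

section
/- For every natural number n ≥ 1, if A is a subset of the cube C_n = {0,1,-1}^n ⊆ ℤ^n such that (a) every standard basis vector e_k (1 ≤ k ≤ n) belongs to A, and (b) A is symmetric (x ∈ A implies -x ∈ A), then there exists a subset B of A with |B| = n+1 such that for all distinct x, y ∈ B, x - y ∉ A (i.e., B is difference-free with respect to A). -/
private lemma snoc_sub {n : ℕ} (x y : Fin n → ℤ) (a b : ℤ) :
    Fin.snoc x a - Fin.snoc y b = (Fin.snoc (x - y) (a - b) : Fin (n+1) → ℤ) := by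
  funext i
  refine Fin.lastCases ?_ (fun j => ?_) i <;> simp

private lemma snoc_neg {n : ℕ} (x : Fin n → ℤ) (a : ℤ) :
    -(Fin.snoc x a) = (Fin.snoc (-x) (-a) : Fin (n+1) → ℤ) := by
  funext i
  refine Fin.lastCases ?_ (fun j => ?_) i <;> simp

private lemma snoc_single {n : ℕ} (k : Fin n) :
    (Fin.snoc (Pi.single k (1:ℤ)) 0 : Fin (n+1) → ℤ) = Pi.single k.castSucc 1 := by
  funext i
  refine Fin.lastCases ?_ (fun j => ?_) i
  · simp [Pi.single_apply, (Fin.castSucc_lt_last k).ne']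
  · simp [Pi.single_apply, Fin.castSucc_inj]

private lemma snoc_zero_one {n : ℕ} :
    (Fin.snoc (0 : Fin n → ℤ) 1 : Fin (n+1) → ℤ) = Pi.single (Fin.last n) 1 := by
  funext i
  refine Fin.lastCases ?_ (fun j => ?_) i
  · simp
  · simp [Pi.single_apply, (Fin.castSucc_lt_last j).ne]

private lemma snoc_injective_left {n : ℕ} {x y : Fin n → ℤ} {a b : ℤ}
    (h : (Fin.snoc x a : Fin (n+1) → ℤ) = Fin.snoc y b) : x = y := by
  funext i
  have := congrFun h i.castSucc
  simpa using this

/-- **Theorem 1.2 (finite version of Kottman's Lemma).** For every `n ≥ 1`, any subset `A`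
of the cube `{0,1,-1}^n ⊆ ℤ^n` containing all standard basis vectors and symmetric admits
a difference-free (with respect to `A`) subset of cardinality `n + 1`. -/
theorem finite_kottman (n : ℕ) (hn : 1 ≤ n) (A : Set (Fin n → ℤ))
    (hcube : A ⊆ {x | ∀ i, x i ∈ ({0, 1, -1} : Set ℤ)})
    (hbasis : ∀ k : Fin n, Pi.single k (1 : ℤ) ∈ A)
    (hsym : ∀ x ∈ A, -x ∈ A) :
    ∃ B : Finset (Fin n → ℤ), ↑B ⊆ A ∧ B.card = n + 1 ∧
      ∀ x ∈ B, ∀ y ∈ B, x ≠ y → x - y ∉ A := by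
  classical
  induction n, hn using Nat.le_induction with
  | base =>
    set x : Fin 1 → ℤ := Pi.single 0 1 with hxdef
    have hx : x ∈ A := hbasis 0
    have hnx : -x ∈ A := hsym _ hx
    have hxne : x ≠ -x := by
      intro h
      have := congrFun h 0
      simp [hxdef, Pi.single_eq_same] at this
    refine ⟨{x, -x}, ?_, ?_, ?_⟩
    · intro y hy
      rcases Finset.mem_insert.mp hy with h | h
      · rw [h]; exact hx
      · rw [Finset.mem_singleton.mp h]; exact hnx
    · rw [Finset.card_pair hxne]
    · intro a ha b hb hab hsubA
      have hkey := hcube hsubA 0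
      rcases Finset.mem_insert.mp ha with h1 | h1 <;>
        rcases Finset.mem_insert.mp hb with h2 | h2
      · exact hab (h1.trans h2.symm)
      · have hv : (a - b) 0 = 2 := by
          rw [h1, Finset.mem_singleton.mp h2]
          simp [hxdef, Pi.single_eq_same]
        rw [hv] at hkey
        simp [Set.mem_insert_iff, Set.mem_singleton_iff] at hkey
      · have hv : (a - b) 0 = -2 := by
          rw [Finset.mem_singleton.mp h1, h2]
          simp [hxdef, Pi.single_eq_same]
        rw [hv] at hkey
        simp [Set.mem_insert_iff, Set.mem_singleton_iff] at hkey
      · exact hab ((Finset.mem_singleton.mp h1).trans (Finset.mem_singleton.mp h2).symm)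
  | succ n hn IH =>
    set A' : Set (Fin n → ℤ) :=
      {x | (Fin.snoc x (-1) : Fin (n+1) → ℤ) ∈ A ∨ (Fin.snoc x 0 : Fin (n+1) → ℤ) ∈ A ∨
        (Fin.snoc x 1 : Fin (n+1) → ℤ) ∈ A} with hA'def
    have hA'mem : ∀ x : Fin n → ℤ,
        x ∈ A' ↔ ((Fin.snoc x (-1) : Fin (n+1) → ℤ) ∈ A ∨
          (Fin.snoc x 0 : Fin (n+1) → ℤ) ∈ A ∨ (Fin.snoc x 1 : Fin (n+1) → ℤ) ∈ A) :=
      fun x => Iff.rfl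
    have hcube' : A' ⊆ {x : Fin n → ℤ | ∀ i, x i ∈ ({0, 1, -1} : Set ℤ)} := by
      intro x hx i
      rcases (hA'mem x).mp hx with h | h | h <;>
        simpa using hcube h i.castSucc
    have hbasis' : ∀ k : Fin n, Pi.single k (1:ℤ) ∈ A' := by
      intro k
      refine (hA'mem _).mpr (Or.inr (Or.inl ?_))
      rw [snoc_single]
      exact hbasis k.castSucc
    have hsym' : ∀ x ∈ A', -x ∈ A' := by
      intro x hx
      rcases (hA'mem x).mp hx with h | h | h
      · refine (hA'mem _).mpr (Or.inr (Or.inr ?_))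
        have := hsym _ h
        rw [snoc_neg] at this
        simpa using this
      · refine (hA'mem _).mpr (Or.inr (Or.inl ?_))
        have := hsym _ h
        rw [snoc_neg] at this
        simpa using this
      · refine (hA'mem _).mpr (Or.inl ?_)
        have := hsym _ h
        rw [snoc_neg] at this
        simpa using this
    obtain ⟨B', hB'A, hB'card, hB'free⟩ := IH A' hcube' hbasis' hsym'
    have hnot2 : ∀ y : Fin n → ℤ, (Fin.snoc y 2 : Fin (n+1) → ℤ) ∉ A := by
      intro y hy
      have h := hcube hy (Fin.last n)
      rw [Fin.snoc_last] at h
      norm_num [Set.mem_insert_iff, Set.mem_singleton_iff] at h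
    set e : Fin (n+1) → ℤ := Fin.snoc 0 1 with hedef
    have heA : e ∈ A := by
      rw [hedef, snoc_zero_one]; exact hbasis _
    have hnee : (Fin.snoc (0 : Fin n → ℤ) (-1) : Fin (n+1) → ℤ) ∈ A := by
      have := hsym _ heA
      rw [hedef, snoc_neg] at this
      simpa using this
    set L : (Fin n → ℤ) → (Fin (n+1) → ℤ) := fun b =>
      if (Fin.snoc b (-1) : Fin (n+1) → ℤ) ∈ A then Fin.snoc b (-1)
      else if (Fin.snoc b 0 : Fin (n+1) → ℤ) ∈ A then Fin.snoc b 0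
      else Fin.snoc b 1 with hLdef
    have hL : ∀ b ∈ A', (∃ ε : ℤ, L b = Fin.snoc b ε) ∧ L b ∈ A ∧ e - L b ∉ A ∧ e ≠ L b := by
      intro b hb
      by_cases h1 : (Fin.snoc b (-1) : Fin (n+1) → ℤ) ∈ A
      · have hLb : L b = Fin.snoc b (-1) := by rw [hLdef]; simp [h1]
        refine ⟨⟨-1, hLb⟩, by rw [hLb]; exact h1, ?_, ?_⟩
        · rw [hLb, hedef, snoc_sub]
          have h2 : (1:ℤ) - (-1) = 2 := by norm_num
          rw [h2]
          exact hnot2 _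
        · intro h
          rw [hedef, hLb] at h
          have := congrFun h (Fin.last n)
          simp only [Fin.snoc_last] at this
          omega
      · by_cases h0 : (Fin.snoc b 0 : Fin (n+1) → ℤ) ∈ A
        · have hLb : L b = Fin.snoc b 0 := by rw [hLdef]; simp [h1, h0]
          refine ⟨⟨0, hLb⟩, by rw [hLb]; exact h0, ?_, ?_⟩
          · rw [hLb, hedef, snoc_sub]
            intro hmem
            have := hsym _ hmem
            rw [snoc_neg] at this
            simp only [neg_sub, sub_zero, zero_sub, neg_neg] at this
            exact h1 this
          · intro h
            rw [hedef, hLb] at h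
            have := congrFun h (Fin.last n)
            simp only [Fin.snoc_last] at this
            omega
        · have hb1 : (Fin.snoc b 1 : Fin (n+1) → ℤ) ∈ A := by
            rcases (hA'mem b).mp hb with h | h | h
            · exact absurd h h1
            · exact absurd h h0
            · exact h
          have hLb : L b = Fin.snoc b 1 := by rw [hLdef]; simp [h1, h0]
          refine ⟨⟨1, hLb⟩, by rw [hLb]; exact hb1, ?_, ?_⟩
          · rw [hLb, hedef, snoc_sub]
            intro hmem
            have := hsym _ hmem
            rw [snoc_neg] at this
            simp only [neg_sub, sub_zero, zero_sub, sub_self, neg_zero, neg_neg] at this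
            exact h0 this
          · intro h
            rw [hedef, hLb] at h
            have hb0 : b = 0 := (snoc_injective_left h).symm
            rw [hb0] at h1
            exact h1 hnee
    have hLinj : Set.InjOn L ↑B' := by
      intro b hb c hc hbc
      obtain ⟨β, hβ⟩ := (hL b (hB'A hb)).1
      obtain ⟨γ, hγ⟩ := (hL c (hB'A hc)).1
      rw [hβ, hγ] at hbc
      exact snoc_injective_left hbc
    have heni : e ∉ B'.image L := by
      intro hmem
      obtain ⟨b, hb, hLb⟩ := Finset.mem_image.mp hmem
      exact (hL b (hB'A hb)).2.2.2 hLb.symm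
    refine ⟨insert e (B'.image L), ?_, ?_, ?_⟩
    · intro z hz
      rcases Finset.mem_insert.mp hz with h | h
      · rw [h]; exact heA
      · obtain ⟨b, hb, hLb⟩ := Finset.mem_image.mp h
        rw [← hLb]
        exact (hL b (hB'A hb)).2.1
    · rw [Finset.card_insert_of_notMem heni, Finset.card_image_of_injOn hLinj, hB'card]
    · intro x hx y hy hxy hmem
      rcases Finset.mem_insert.mp hx with h1 | h1
      · rcases Finset.mem_insert.mp hy with h2 | h2
        · exact hxy (h1.trans h2.symm)
        · obtain ⟨b, hb, hLb⟩ := Finset.mem_image.mp h2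
          rw [h1, ← hLb] at hmem
          exact (hL b (hB'A hb)).2.2.1 hmem
      · obtain ⟨b, hb, hLb⟩ := Finset.mem_image.mp h1
        rcases Finset.mem_insert.mp hy with h2 | h2
        · have hneg := hsym _ hmem
          rw [neg_sub, h2, ← hLb] at hneg
          exact (hL b (hB'A hb)).2.2.1 hneg
        · obtain ⟨c, hc, hLc⟩ := Finset.mem_image.mp h2
          have hbc : b ≠ c := by
            intro h
            apply hxy
            rw [← hLb, ← hLc, h]
          obtain ⟨β, hβ⟩ := (hL b (hB'A hb)).1
          obtain ⟨γ, hγ⟩ := (hL c (hB'A hc)).1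
          rw [← hLb, ← hLc, hβ, hγ, snoc_sub] at hmem
          have hdval := hcube hmem (Fin.last n)
          rw [Fin.snoc_last] at hdval
          simp only [Set.mem_insert_iff, Set.mem_singleton_iff] at hdval
          have hBC : b - c ∈ A' := by
            refine (hA'mem _).mpr ?_
            rcases hdval with h | h | h
            · rw [h] at hmem; exact Or.inr (Or.inl hmem)
            · rw [h] at hmem; exact Or.inr (Or.inr hmem)
            · rw [h] at hmem; exact Or.inl hmem
          exact hB'free b hb c hc hbc hBC
end

section
/- For every natural number n ≥ 1, if A is a subset of the cube C_n = {0,1,-1}^n ⊆ ℤ^n such that (a) every standard basis vector e_k (1 ≤ k ≤ n) belongs to A, and (b) A is symmetric, then there exists a subset B of A with |B| = n such that for all distinct x, y ∈ B, x + y ∉ A (i.e., B is sum-free with respect to A). -/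
/-- Weight function used to pick extremal elements. -/
def kfWeight (n : ℕ) (x : Fin n → ℤ) : ℤ := ∑ i : Fin n, 4 ^ (i : ℕ) * x i

lemma kfWeight_add (n : ℕ) (x y : Fin n → ℤ) :
    kfWeight n (x + y) = kfWeight n x + kfWeight n y := by
  simp [kfWeight, mul_add, Finset.sum_add_distrib]

lemma kottman_geom_lt (m : ℕ) : ∑ i ∈ Finset.range m, (4:ℤ) ^ i < 4 ^ m := by
  have h := geom_sum_mul (4:ℤ) m
  have hnn : (0:ℤ) ≤ ∑ i ∈ Finset.range m, (4:ℤ) ^ i :=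
    Finset.sum_nonneg fun i _ => by positivity
  have hp : (0:ℤ) < 4 ^ m := by positivity
  nlinarith

lemma kfWeight_le (n : ℕ) (x : Fin n → ℤ)
    (hx : ∀ i, x i = 0 ∨ x i = 1 ∨ x i = -1) :
    kfWeight n x ≤ ∑ i : Fin n, 4 ^ (i : ℕ) := by
  apply Finset.sum_le_sum
  intro i _
  have h1 : x i ≤ 1 := by rcases hx i with h | h | h <;> simp [h]
  have hp : (0:ℤ) ≤ 4 ^ (i:ℕ) := by positivity
  nlinarith

lemma kfWeight_pos (n : ℕ) (j : Fin n) (x : Fin n → ℤ)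
    (hx : ∀ i, x i = 0 ∨ x i = 1 ∨ x i = -1)
    (h1 : x j = 1) (h0 : ∀ i, j < i → x i = 0) :
    0 < kfWeight n x := by
  classical
  have hsplit : kfWeight n x
      = 4 ^ (j:ℕ) * x j + ∑ i ∈ Finset.univ.erase j, 4 ^ (i:ℕ) * x i :=
    (Finset.add_sum_erase _ _ (Finset.mem_univ j)).symm
  set S : Finset (Fin n) := Finset.univ.filter (fun i => i < j) with hSdef
  have hsub : S ⊆ Finset.univ.erase j := by
    intro i hi
    simp only [hSdef, Finset.mem_filter] at hi
    exact Finset.mem_erase.mpr ⟨ne_of_lt hi.2, Finset.mem_univ i⟩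
  have hrestrict : ∑ i ∈ Finset.univ.erase j, 4 ^ (i:ℕ) * x i
      = ∑ i ∈ S, 4 ^ (i:ℕ) * x i := by
    refine (Finset.sum_subset hsub ?_).symm
    intro i hi hiS
    have hij : i ≠ j := (Finset.mem_erase.mp hi).1
    have : ¬ i < j := by
      intro h; exact hiS (by simp [hSdef, h])
    have hji : j < i := lt_of_le_of_ne (not_lt.mp this) (Ne.symm hij)
    rw [h0 i hji, mul_zero]
  have hlow : -(∑ i ∈ S, (4:ℤ) ^ (i:ℕ)) ≤ ∑ i ∈ S, 4 ^ (i:ℕ) * x i := by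
    rw [← Finset.sum_neg_distrib]
    apply Finset.sum_le_sum
    intro i _
    have hge : (-1:ℤ) ≤ x i := by rcases hx i with h | h | h <;> simp [h]
    have hp : (0:ℤ) ≤ 4 ^ (i:ℕ) := by positivity
    nlinarith
  have himg : ∑ i ∈ S, (4:ℤ) ^ (i:ℕ) = ∑ m ∈ S.image Fin.val, (4:ℤ) ^ m :=
    (Finset.sum_image (fun a _ b _ h => Fin.val_injective h)).symm
  have hsub2 : S.image Fin.val ⊆ Finset.range (j:ℕ) := by
    intro m hm
    simp only [Finset.mem_image, hSdef, Finset.mem_filter] at hm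
    obtain ⟨i, ⟨_, hij⟩, rfl⟩ := hm
    exact Finset.mem_range.mpr hij
  have hle2 : ∑ m ∈ S.image Fin.val, (4:ℤ) ^ m ≤ ∑ m ∈ Finset.range (j:ℕ), (4:ℤ) ^ m :=
    Finset.sum_le_sum_of_subset_of_nonneg hsub2 (fun i _ _ => by positivity)
  have hfin : ∑ i ∈ S, (4:ℤ) ^ (i:ℕ) < 4 ^ (j:ℕ) := by
    rw [himg]; exact lt_of_le_of_lt hle2 (kottman_geom_lt _)
  rw [hsplit, h1, hrestrict]
  linarith

/-- **Theorem 1.4 (sum-free version).** For every `n ≥ 1`, any subset `A` of the cube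
`{0,1,-1}^n ⊆ ℤ^n` containing all standard basis vectors and symmetric admits a
sum-free (with respect to `A`) subset of cardinality `n`. -/
theorem finite_kottman_sumfree (n : ℕ) (hn : 1 ≤ n) (A : Set (Fin n → ℤ))
    (hcube : A ⊆ {x | ∀ i, x i ∈ ({0, 1, -1} : Set ℤ)})
    (hbasis : ∀ k : Fin n, Pi.single k (1 : ℤ) ∈ A)
    (hsym : ∀ x ∈ A, -x ∈ A) :
    ∃ B : Finset (Fin n → ℤ), ↑B ⊆ A ∧ B.card = n ∧
      ∀ x ∈ B, ∀ y ∈ B, x ≠ y → x + y ∉ A := by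
  classical
  have hcube' : ∀ x ∈ A, ∀ i, x i = 0 ∨ x i = 1 ∨ x i = -1 := by
    intro x hx i
    have := hcube hx i
    simpa using this
  -- for each k choose a maximizer of kfWeight over S_k
  have key : ∀ k : Fin n, ∃ x : Fin n → ℤ,
      (x ∈ A ∧ x k = 1 ∧ ∀ i, k < i → x i = 0) ∧
      ∀ y : Fin n → ℤ, (y ∈ A ∧ y k = 1 ∧ ∀ i, k < i → y i = 0) →
        kfWeight n y ≤ kfWeight n x := by
    intro k
    set P : ℤ → Prop := fun m => ∃ x : Fin n → ℤ,
      (x ∈ A ∧ x k = 1 ∧ ∀ i, k < i → x i = 0) ∧ kfWeight n x = m with hP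
    have Hbdd : ∃ b : ℤ, ∀ z : ℤ, P z → z ≤ b := by
      refine ⟨∑ i : Fin n, 4 ^ (i:ℕ), ?_⟩
      rintro z ⟨x, ⟨hxA, _, _⟩, rfl⟩
      exact kfWeight_le n x (hcube' x hxA)
    have Hinh : ∃ z : ℤ, P z := by
      refine ⟨kfWeight n (Pi.single k (1:ℤ)), Pi.single k 1, ⟨hbasis k, ?_, ?_⟩, rfl⟩
      · simp
      · intro i hi
        exact Pi.single_eq_of_ne (ne_of_gt hi) _
    obtain ⟨ub, ⟨x, hx, hxw⟩, hub⟩ := Int.exists_greatest_of_bdd Hbdd Hinh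
    exact ⟨x, hx, fun y hy => by rw [hxw]; exact hub _ ⟨y, hy, rfl⟩⟩
  choose b hb hmax using key
  have hbA : ∀ k, b k ∈ A := fun k => (hb k).1
  have hb1 : ∀ k, b k k = 1 := fun k => (hb k).2.1
  have hb0 : ∀ k i, k < i → b k i = 0 := fun k => (hb k).2.2
  -- the sum of two chosen elements never lies in A
  have keysum : ∀ j k : Fin n, j < k → b j + b k ∉ A := by
    intro j k hjk hmem
    have h1 : (b j + b k) k = 1 := by
      show b j k + b k k = 1
      rw [hb0 j k hjk, hb1 k]; ring
    have h0 : ∀ i, k < i → (b j + b k) i = 0 := by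
      intro i hi
      show b j i + b k i = 0
      rw [hb0 j i (hjk.trans hi), hb0 k i hi]; ring
    have hle := hmax k (b j + b k) ⟨hmem, h1, h0⟩
    rw [kfWeight_add] at hle
    have hpos := kfWeight_pos n j (b j) (hcube' _ (hbA j)) (hb1 j) (hb0 j)
    linarith
  have hinj : Function.Injective b := by
    intro j k h
    by_contra hne
    rcases lt_or_gt_of_ne hne with hlt | hlt
    · have : b j k = b k k := by rw [h]
      rw [hb0 j k hlt, hb1 k] at this
      exact absurd this (by norm_num)
    · have : b k j = b j j := by rw [h]
      rw [hb0 k j hlt, hb1 j] at this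
      exact absurd this (by norm_num)
  refine ⟨Finset.image b Finset.univ, ?_, ?_, ?_⟩
  · intro x hx
    simp only [Finset.coe_image, Set.mem_image] at hx
    obtain ⟨k, _, rfl⟩ := hx
    exact hbA k
  · rw [Finset.card_image_of_injective _ hinj, Finset.card_univ, Fintype.card_fin]
  · intro x hx y hy hne hmem
    simp only [Finset.mem_image, Finset.mem_univ, true_and] at hx hy
    obtain ⟨j, rfl⟩ := hx
    obtain ⟨k, rfl⟩ := hy
    have hjk : j ≠ k := fun h => hne (by rw [h])
    rcases lt_or_gt_of_ne hjk with hlt | hlt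
    · exact keysum j k hlt hmem
    · exact keysum k j hlt (by rwa [add_comm] at hmem)
end

section
/- Let n ≥ 1 and let B be a subset of {1,…,n}² \ {(k,k) : 1 ≤ k ≤ n} with the property (*): for all distinct x, y ∈ B and every k belonging to both supp x and supp y, either (k is the first coordinate of x and the second coordinate of y) or (k is the second coordinate of x and the first coordinate of y). If |B| = n, then for every k ∈ {1,…,n} there exist distinct x, y ∈ B such that k ∈ supp x ∩ supp y. -/
/-- **Lemma 2.7 (b).** If `B ⊆ {1,…,n}² \ diagonal` has the property `(*)` and `|B| = n`,
then every `k ∈ {1,…,n}` lies in the supports of two distinct elements of `B`. -/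
theorem support_lemma_max (n : ℕ) (hn : 1 ≤ n) (B : Finset (Fin n × Fin n))
    (hdiag : ∀ x ∈ B, x.1 ≠ x.2)
    (hstar : ∀ x ∈ B, ∀ y ∈ B, x ≠ y →
      ∀ k : Fin n, k ∈ ({x.1, x.2} : Set (Fin n)) → k ∈ ({y.1, y.2} : Set (Fin n)) →
        (k = x.1 ∧ k = y.2) ∨ (k = x.2 ∧ k = y.1))
    (hcard : B.card = n) :
    ∀ k : Fin n, ∃ x ∈ B, ∃ y ∈ B, x ≠ y ∧
      k ∈ ({x.1, x.2} : Set (Fin n)) ∧ k ∈ ({y.1, y.2} : Set (Fin n)) := by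
  classical
  set g : Fin n → ℕ := fun k => (B.filter (fun x => k = x.1 ∨ k = x.2)).card with hg
  -- each k appears at most twice
  have h1 : ∀ k : Fin n, (B.filter (fun x => k = x.1)).card ≤ 1 := by
    intro k
    apply Finset.card_le_one.2
    intro a ha b hb
    simp only [Finset.mem_filter] at ha hb
    by_contra hab
    rcases hstar a ha.1 b hb.1 hab k (by left; exact ha.2) (by left; exact hb.2) with
      ⟨h, h'⟩ | ⟨h, h'⟩
    · exact hdiag b hb.1 (hb.2 ▸ h' ▸ rfl)
    · exact hdiag a ha.1 (ha.2 ▸ h ▸ rfl)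
  have h2 : ∀ k : Fin n, (B.filter (fun x => k = x.2)).card ≤ 1 := by
    intro k
    apply Finset.card_le_one.2
    intro a ha b hb
    simp only [Finset.mem_filter] at ha hb
    by_contra hab
    rcases hstar a ha.1 b hb.1 hab k (by right; exact ha.2) (by right; exact hb.2) with
      ⟨h, h'⟩ | ⟨h, h'⟩
    · exact hdiag a ha.1 (ha.2 ▸ h ▸ rfl)
    · exact hdiag b hb.1 (hb.2 ▸ h' ▸ rfl)
  have hle : ∀ k : Fin n, g k ≤ 2 := by
    intro k
    have : (B.filter (fun x => k = x.1 ∨ k = x.2))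
        ⊆ (B.filter (fun x => k = x.1)) ∪ (B.filter (fun x => k = x.2)) := by
      intro x hx
      simp only [Finset.mem_filter, Finset.mem_union] at hx ⊢
      tauto
    calc g k ≤ ((B.filter (fun x => k = x.1)) ∪ (B.filter (fun x => k = x.2))).card :=
          Finset.card_le_card this
      _ ≤ _ + _ := Finset.card_union_le _ _
      _ ≤ 2 := by have := h1 k; have := h2 k; omega
  -- total count
  have hsum : ∑ k : Fin n, g k = 2 * n := by
    have : ∑ k : Fin n, g k = ∑ x ∈ B, (Finset.univ.filter
        (fun k : Fin n => k = x.1 ∨ k = x.2)).card := by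
      simp only [hg, Finset.card_filter]
      rw [Finset.sum_comm]
    rw [this]
    have hx2 : ∀ x ∈ B, (Finset.univ.filter (fun k : Fin n => k = x.1 ∨ k = x.2)).card = 2 := by
      intro x hx
      have : Finset.univ.filter (fun k : Fin n => k = x.1 ∨ k = x.2)
          = {x.1, x.2} := by
        ext k; simp [Finset.mem_insert]
      rw [this, Finset.card_insert_of_notMem (by simpa using hdiag x hx),
        Finset.card_singleton]
    rw [Finset.sum_congr rfl hx2, Finset.sum_const, hcard]
    ring
  -- hence each g k = 2
  have heq : ∀ k : Fin n, g k = 2 := by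
    by_contra hc
    push_neg at hc
    obtain ⟨k0, hk0⟩ := hc
    have hlt : g k0 < 2 := lt_of_le_of_ne (hle k0) hk0
    have : ∑ k : Fin n, g k < ∑ _k : Fin n, 2 :=
      Finset.sum_lt_sum (fun i _ => hle i) ⟨k0, Finset.mem_univ k0, hlt⟩
    rw [hsum] at this
    simp at this
    omega
  intro k
  obtain ⟨x, y, hxy, hset⟩ := Finset.card_eq_two.1 (heq k)
  have hx : x ∈ B.filter (fun x => k = x.1 ∨ k = x.2) := by rw [hset]; simp
  have hy : y ∈ B.filter (fun x => k = x.1 ∨ k = x.2) := by rw [hset]; simp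
  simp only [Finset.mem_filter] at hx hy
  exact ⟨x, hx.1, y, hy.1, hxy, by simpa using hx.2, by simpa using hy.2⟩
end

section
/- (Sharpness of Theorem 1.2; lower bound in K(n+1) = n.) For every n ≥ 2, the set A = {e_i : 1 ≤ i ≤ n-1} ∪ {-e_i : 1 ≤ i ≤ n-1} ∪ {e_i - e_j : 1 ≤ i ≠ j ≤ n-1} ⊆ C_{n-1} = {0,1,-1}^{n-1} ⊆ ℤ^{n-1} contains all standard basis vectors, is symmetric, and has the property that every subset B of A with |B| = n+1 contains distinct x, y with x - y ∈ A. In particular, there is no subset of A of cardinality n+1 that is difference-free with respect to A. -/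
set_option maxHeartbeats 1600000 in
/-- **Sharpness in `K(n+1) = n`.** For `n ≥ 2` the set
`A = {±e i : i} ∪ {e i - e j : i ≠ j} ⊆ {0,1,-1}^{n-1}` contains all standard basis
vectors, is symmetric, and every subset of `A` with `n + 1` elements contains two distinct
elements whose difference lies in `A`; in particular `A` has no difference-free subset of
cardinality `n + 1`. -/
theorem sharpness_difference (n : ℕ) (hn : 2 ≤ n)
    (A : Set (Fin (n - 1) → ℤ))
    (hA : A = {v | ∃ i, v = Pi.single i (1 : ℤ)} ∪
              {v | ∃ i, v = -Pi.single i (1 : ℤ)} ∪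
              {v | ∃ i j, i ≠ j ∧ v = Pi.single i (1 : ℤ) - Pi.single j (1 : ℤ)}) :
    A ⊆ {v | ∀ i, v i ∈ ({0, 1, -1} : Set ℤ)} ∧
    (∀ k : Fin (n - 1), Pi.single k (1 : ℤ) ∈ A) ∧
    (∀ v ∈ A, -v ∈ A) ∧
    (∀ B : Finset (Fin (n - 1) → ℤ), ↑B ⊆ A → B.card = n + 1 →
      ∃ u ∈ B, ∃ v ∈ B, u ≠ v ∧ u - v ∈ A) ∧
    ¬∃ B : Finset (Fin (n - 1) → ℤ), ↑B ⊆ A ∧ B.card = n + 1 ∧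
      ∀ u ∈ B, ∀ v ∈ B, u ≠ v → u - v ∉ A := by
  classical
  have hmem : ∀ v : Fin (n - 1) → ℤ, v ∈ A ↔
      ((∃ i, v = Pi.single i (1 : ℤ)) ∨ (∃ i, v = -Pi.single i (1 : ℤ))) ∨
        (∃ i j, i ≠ j ∧ v = Pi.single i (1 : ℤ) - Pi.single j (1 : ℤ)) := by
    intro v; rw [hA]; rfl
  have hmain : ∀ B : Finset (Fin (n - 1) → ℤ), ↑B ⊆ A → B.card = n + 1 →
      ∃ u ∈ B, ∃ v ∈ B, u ≠ v ∧ u - v ∈ A := by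
    intro B hB hcard
    set f : Option (Fin (n - 1)) → (Fin (n - 1) → ℤ) :=
      fun o => o.elim 0 (fun i => Pi.single i 1) with hf
    have hrep : ∀ v ∈ B, ∃ p : Option (Fin (n - 1)) × Option (Fin (n - 1)),
        v = f p.1 - f p.2 := by
      intro v hv
      rcases (hmem v).1 (hB hv) with (⟨k, rfl⟩ | ⟨k, rfl⟩) | ⟨k, l, hkl, rfl⟩
      · exact ⟨(some k, none), by simp [hf]⟩
      · exact ⟨(none, some k), by simp [hf]⟩
      · exact ⟨(some k, some l), by simp [hf]⟩
    choose g hg using hrep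
    have hlt : (Finset.univ : Finset (Option (Fin (n - 1)))).card < B.attach.card := by
      rw [Finset.card_attach, hcard, Finset.card_univ, Fintype.card_option,
        Fintype.card_fin]
      omega
    obtain ⟨x, -, y, -, hxy, hfst⟩ :=
      Finset.exists_ne_map_eq_of_card_lt_of_maps_to hlt
        (f := fun (z : {v // v ∈ B}) => (g z.1 z.2).1) (fun z _ => Finset.mem_univ _)
    refine ⟨x.1, x.2, y.1, y.2, ?_, ?_⟩
    · intro h; exact hxy (Subtype.ext h)
    · have hx := hg x.1 x.2
      have hy := hg y.1 y.2
      have hdiff : x.1 - y.1 = f (g y.1 y.2).2 - f (g x.1 x.2).2 := by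
        conv_lhs => rw [hx, hy]
        rw [hfst]; ring
      have hne : (g y.1 y.2).2 ≠ (g x.1 x.2).2 := by
        intro h
        apply hxy
        apply Subtype.ext
        rw [hx, hy, hfst, h]
      rw [hdiff, hmem]
      rcases hd : (g y.1 y.2).2 with _ | i <;> rcases hb : (g x.1 x.2).2 with _ | j
      · exact absurd (hd.trans hb.symm) hne
      · exact Or.inl (Or.inr ⟨j, by simp [hf]⟩)
      · exact Or.inl (Or.inl ⟨i, by simp [hf]⟩)
      · have hij : i ≠ j := by rintro rfl; exact hne (hd.trans hb.symm)
        exact Or.inr ⟨i, j, hij, by simp [hf]⟩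
  refine ⟨?_, ?_, ?_, hmain, ?_⟩
  · intro v hv i
    rcases (hmem v).1 hv with (⟨k, rfl⟩ | ⟨k, rfl⟩) | ⟨k, l, hkl, rfl⟩ <;>
      simp [Pi.single_apply] <;> split_ifs <;> simp_all
  · intro k; exact (hmem _).2 (Or.inl (Or.inl ⟨k, rfl⟩))
  · intro v hv
    rw [hmem]
    rcases (hmem v).1 hv with (⟨k, rfl⟩ | ⟨k, rfl⟩) | ⟨k, l, hkl, rfl⟩
    · exact Or.inl (Or.inr ⟨k, rfl⟩)
    · exact Or.inl (Or.inl ⟨k, by rw [neg_neg]⟩)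
    · exact Or.inr ⟨l, k, hkl.symm, by ring⟩
  · rintro ⟨B, hB, hcard, hfree⟩
    obtain ⟨u, hu, v, hv, huv, hmem⟩ := hmain B hB hcard
    exact hfree u hu v hv huv hmem
end

section
/- (Sharpness of Theorem 1.4; lower bound in S(l) = l.) For every l > 2, the set A = {e_i : 1 ≤ i ≤ l-1} ∪ {-e_i : 1 ≤ i ≤ l-1} ∪ {0} ⊆ C_{l-1} = {0,1,-1}^{l-1} ⊆ ℤ^{l-1} contains all standard basis vectors, is symmetric, and has the property that every subset B of A with |B| = l contains distinct x, y with x + y ∈ A. In particular, there is no subset of A of cardinality l that is sum-free with respect to A. -/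
/-- **Sharpness in `S(l) = l`.** For `l > 2` the set
`A = {±e i : i} ∪ {0} ⊆ {0,1,-1}^{l-1}` contains all standard basis vectors, is symmetric,
and every subset of `A` with `l` elements contains two distinct elements whose sum lies in
`A`; in particular `A` has no sum-free subset of cardinality `l`. -/
theorem sharpness_sum (l : ℕ) (hl : 2 < l)
    (A : Set (Fin (l - 1) → ℤ))
    (hA : A = {v | ∃ i, v = Pi.single i (1 : ℤ)} ∪
              {v | ∃ i, v = -Pi.single i (1 : ℤ)} ∪ {0}) :
    A ⊆ {v | ∀ i, v i ∈ ({0, 1, -1} : Set ℤ)} ∧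
    (∀ k : Fin (l - 1), Pi.single k (1 : ℤ) ∈ A) ∧
    (∀ v ∈ A, -v ∈ A) ∧
    (∀ B : Finset (Fin (l - 1) → ℤ), ↑B ⊆ A → B.card = l →
      ∃ u ∈ B, ∃ v ∈ B, u ≠ v ∧ u + v ∈ A) ∧
    ¬∃ B : Finset (Fin (l - 1) → ℤ), ↑B ⊆ A ∧ B.card = l ∧
      ∀ u ∈ B, ∀ v ∈ B, u ≠ v → u + v ∉ A := by
  subst hA
  have hpos : 0 < l - 1 := by omega
  have key : ∀ B : Finset (Fin (l - 1) → ℤ),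
      ↑B ⊆ ({v | ∃ i, v = Pi.single i (1 : ℤ)} ∪
        {v | ∃ i, v = -Pi.single i (1 : ℤ)} ∪ {0} : Set (Fin (l-1) → ℤ)) → B.card = l →
      ∃ u ∈ B, ∃ v ∈ B, u ≠ v ∧ u + v ∈
        ({v | ∃ i, v = Pi.single i (1 : ℤ)} ∪
          {v | ∃ i, v = -Pi.single i (1 : ℤ)} ∪ {0} : Set (Fin (l-1) → ℤ)) := by
    intro B hB hcard
    by_cases h0 : (0 : Fin (l-1) → ℤ) ∈ B
    · have : ∃ x ∈ B, x ≠ (0 : Fin (l-1) → ℤ) := by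
        by_contra hc
        push_neg at hc
        have : B ⊆ {0} := fun x hx => Finset.mem_singleton.2 (hc x hx)
        have := Finset.card_le_card this
        simp at this
        omega
      obtain ⟨x, hxB, hx0⟩ := this
      refine ⟨0, h0, x, hxB, fun h => hx0 h.symm, ?_⟩
      rw [zero_add]
      exact hB hxB
    · -- every element of B is ±e_i; pigeonhole on indices
      set g : (Fin (l-1) → ℤ) → Fin (l-1) :=
        fun v => if h : ∃ i, v i ≠ 0 then h.choose else ⟨0, hpos⟩ with hg
      have hform : ∀ v ∈ B, v = Pi.single (g v) (1:ℤ) ∨ v = -Pi.single (g v) (1:ℤ) := by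
        intro v hvB
        have hvA := hB hvB
        rcases hvA with (⟨i, hi⟩ | ⟨i, hi⟩) | hv0
        · subst hi
          have hex : ∃ j, (Pi.single i (1:ℤ) : Fin (l-1) → ℤ) j ≠ 0 := ⟨i, by simp⟩
          have hch := hex.choose_spec
          have hgi : g ((Pi.single i (1:ℤ) : Fin (l-1) → ℤ)) = i := by
            rw [hg]
            simp only [dif_pos hex]
            by_contra hne
            apply hch
            rw [Pi.single_apply, if_neg hne]
          left; rw [hgi]
        · subst hi
          have hex : ∃ j, (-Pi.single i (1:ℤ) : Fin (l-1) → ℤ) j ≠ 0 := ⟨i, by simp⟩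
          have hch := hex.choose_spec
          have hgi : g ((-Pi.single i (1:ℤ) : Fin (l-1) → ℤ)) = i := by
            rw [hg]
            simp only [dif_pos hex]
            by_contra hne
            apply hch
            rw [Pi.neg_apply, Pi.single_apply, if_neg hne]
            ring
          right; rw [hgi]
        · simp only [Set.mem_singleton_iff] at hv0
          subst hv0
          exact absurd hvB h0
      have hlt : (Finset.univ : Finset (Fin (l-1))).card < B.card := by
        rw [hcard, Finset.card_univ, Fintype.card_fin]
        omega
      obtain ⟨x, hxB, y, hyB, hxy, hgxy⟩ :=
        Finset.exists_ne_map_eq_of_card_lt_of_maps_to hlt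
          (fun v _ => Finset.mem_univ (g v))
      rcases hform x hxB with hx | hx <;> rcases hform y hyB with hy | hy
      · exact absurd (hx.trans (by rw [hgxy, ← hy])) hxy
      · refine ⟨x, hxB, y, hyB, hxy, Or.inr ?_⟩
        rw [hx, hy, hgxy]
        simp
      · refine ⟨x, hxB, y, hyB, hxy, Or.inr ?_⟩
        rw [hx, hy, hgxy]
        simp
      · exact absurd (hx.trans (by rw [hgxy, ← hy])) hxy
  refine ⟨?_, ?_, ?_, key, ?_⟩
  · rintro v ((⟨i, rfl⟩ | ⟨i, rfl⟩) | rfl) j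
    · rcases eq_or_ne j i with h | h <;> simp [Pi.single_apply, h]
    · rcases eq_or_ne j i with h | h <;> simp [Pi.single_apply, h]
    · simp
  · intro k; exact Or.inl (Or.inl ⟨k, rfl⟩)
  · rintro v ((⟨i, rfl⟩ | ⟨i, rfl⟩) | rfl)
    · exact Or.inl (Or.inr ⟨i, rfl⟩)
    · exact Or.inl (Or.inl ⟨i, by simp⟩)
    · simp
  · rintro ⟨B, hB, hcard, hfree⟩
    obtain ⟨u, hu, v, hv, huv, hsum⟩ := key B hB hcard
    exact hfree u hu v hv huv hsum
end

section
/- (Lower bound in K_ℂ(2n+1) = n.) For every n > 1 there exists a subset A of V_{n-1} = {0, 1, -1, i, -i}^{n-1} ⊆ ℂ^{n-1} such that (a) every standard basis vector e_k (1 ≤ k ≤ n-1) belongs to A, (b) x ∈ A implies i·x ∈ A, and (c) every subset B of A with |B| = 2n+1 contains distinct x, y with x - y ∈ A; in particular A admits no difference-free subset of cardinality 2n+1. -/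
namespace CKL

noncomputable def units : Finset ℂ := {1, -1, Complex.I, -Complex.I}

lemma mem_units_iff {u : ℂ} : u ∈ units ↔ u = 1 ∨ u = -1 ∨ u = Complex.I ∨ u = -Complex.I := by
  simp [units]

lemma units_ne_zero {u : ℂ} (hu : u ∈ units) : u ≠ 0 := by
  rcases mem_units_iff.1 hu with h | h | h | h <;> subst h <;>
    simp [Complex.I_ne_zero]

lemma neg_mem_units {u : ℂ} (hu : u ∈ units) : -u ∈ units := by
  rcases mem_units_iff.1 hu with h | h | h | h <;> subst h <;>
    simp [mem_units_iff]

lemma I_mul_mem_units {u : ℂ} (hu : u ∈ units) : Complex.I * u ∈ units := by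
  rcases mem_units_iff.1 hu with h | h | h | h <;> subst h <;>
    simp [mem_units_iff, Complex.I_mul_I]

/-- `f j u` is `u • e_j` if `j = some t`, and `0` if `j = none`. -/
def f {m : ℕ} (j : Option (Fin m)) (u : ℂ) : Fin m → ℂ :=
  fun t => if j = some t then u else 0

lemma f_apply {m : ℕ} (j : Option (Fin m)) (u : ℂ) (t : Fin m) :
    f j u t = if j = some t then u else 0 := rfl

lemma f_sum {m : ℕ} (j : Option (Fin m)) (u : ℂ) :
    ∑ t, f j u t = if j = none then 0 else u := by
  cases j with
  | none => simp [f]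
  | some a => simp [f]

def A (m : ℕ) : Set (Fin m → ℂ) :=
  {x | ∃ j k : Option (Fin m), ∃ u ∈ units, j ≠ k ∧ x = f j u - f k u}

def slotMem {m : ℕ} (s : Option (Fin m) × ℂ) (x : Fin m → ℂ) : Prop :=
  s.2 ≠ 0 ∧ (match s.1 with
  | some t => x t = s.2
  | none => s.2 = -∑ t, x t)

/-- Slot characterization: the only slots of `f j u - f k u` are `(j, u)` and `(k, -u)`. -/
lemma slot_char {m : ℕ} {j k : Option (Fin m)} {u : ℂ} (hu : u ≠ 0) (hjk : j ≠ k)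
    (s : Option (Fin m) × ℂ) (hs : slotMem s (f j u - f k u)) :
    s = (j, u) ∨ s = (k, -u) := by
  obtain ⟨p, w⟩ := s
  obtain ⟨hw, hval⟩ := hs
  cases p with
  | some t =>
    simp only at hval
    rw [Pi.sub_apply, f_apply, f_apply] at hval
    by_cases hj : j = some t <;> by_cases hk : k = some t
    · exact absurd (hj.trans hk.symm) hjk
    · left; simp [hj, hk] at hval; subst hj; simp [hval]
    · right; simp [hj, hk] at hval; subst hk; simp [← hval]
    · simp [hj, hk] at hval; exact absurd hval.symm hw
  | none =>
    simp only [Pi.sub_apply] at hval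
    rw [Finset.sum_sub_distrib, f_sum, f_sum] at hval
    by_cases hj : j = none <;> by_cases hk : k = none
    · exact absurd (hj.trans hk.symm) hjk
    · left; simp [hj, hk] at hval; subst hj hval; simp
    · right; simp [hj, hk] at hval; subst hk hval; simp
    · simp [hj, hk] at hval; exact absurd hval hw

/-- Every element of `A` has two slots with distinct first components and unit values. -/
lemma slots_exist {m : ℕ} {x : Fin m → ℂ} (hx : x ∈ A m) :
    ∃ s₁ s₂ : Option (Fin m) × ℂ, s₁.1 ≠ s₂.1 ∧ s₁.2 ∈ units ∧ s₂.2 ∈ units ∧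
      slotMem s₁ x ∧ slotMem s₂ x := by
  obtain ⟨j, k, u, hu, hjk, rfl⟩ := hx
  have hu0 : u ≠ 0 := units_ne_zero hu
  refine ⟨(j, u), (k, -u), hjk, hu, neg_mem_units hu, ?_, ?_⟩
  · cases j with
    | some t =>
      refine ⟨hu0, ?_⟩
      show (f (some t) u - f k u) t = u
      rw [Pi.sub_apply, f_apply, f_apply, if_pos rfl, if_neg (by rintro rfl; exact hjk rfl)]
      ring
    | none =>
      refine ⟨hu0, ?_⟩
      show u = -∑ t : Fin m, (f (none : Option (Fin m)) u - f k u) t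
      simp only [Pi.sub_apply]
      rw [Finset.sum_sub_distrib, f_sum, f_sum, if_pos rfl,
        if_neg (by rintro rfl; exact hjk rfl)]
      ring
  · cases k with
    | some t =>
      refine ⟨neg_ne_zero.2 hu0, ?_⟩
      show (f j u - f (some t) u) t = -u
      rw [Pi.sub_apply, f_apply, f_apply, if_pos rfl, if_neg (by rintro rfl; exact hjk rfl)]
      ring
    | none =>
      refine ⟨neg_ne_zero.2 hu0, ?_⟩
      show -u = -∑ t : Fin m, (f j u - f (none : Option (Fin m)) u) t
      simp only [Pi.sub_apply]
      rw [Finset.sum_sub_distrib, f_sum, f_sum, if_pos rfl,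
        if_neg (by rintro rfl; exact hjk rfl)]
      ring

lemma f_neg {m : ℕ} (j : Option (Fin m)) (u : ℂ) : f j (-u) = - f j u := by
  ext t; simp only [f, Pi.neg_apply]; split <;> simp

/-- Two elements of `A` sharing a slot are equal or have difference in `A`. -/
lemma eq_or_sub_mem {m : ℕ} {x y : Fin m → ℂ} (hx : x ∈ A m) (hy : y ∈ A m)
    {s : Option (Fin m) × ℂ} (hsx : slotMem s x) (hsy : slotMem s y) :
    x = y ∨ x - y ∈ A m := by
  obtain ⟨j, k, u, hu, hjk, rfl⟩ := hx
  obtain ⟨j', k', u', hu', hjk', rfl⟩ := hy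
  have hu0 : u ≠ 0 := units_ne_zero hu
  have hu0' : u' ≠ 0 := units_ne_zero hu'
  have hcx := slot_char hu0 hjk s hsx
  have hcy := slot_char hu0' hjk' s hsy
  rcases hcx with rfl | rfl
  · rcases hcy with h | h
    · -- (j, u) = (j', u')
      rw [Prod.mk.injEq] at h
      obtain ⟨rfl, rfl⟩ := h
      by_cases hkk : k = k'
      · subst hkk; left; rfl
      · right; exact ⟨k', k, u, hu, fun hh => hkk hh.symm, by abel⟩
    · -- (j, u) = (k', -u')
      rw [Prod.mk.injEq] at h
      obtain ⟨rfl, h2⟩ := h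
      have h3 : u' = -u := by rw [h2, neg_neg]
      subst h3
      have hy2 : f j' (-u) - f j (-u) = f j u - f j' u := by rw [f_neg, f_neg]; abel
      rw [hy2]
      by_cases hjj : j' = k
      · subst hjj; left; rfl
      · right; exact ⟨j', k, u, hu, hjj, by abel⟩
  · rcases hcy with h | h
    · -- (k, -u) = (j', u')
      rw [Prod.mk.injEq] at h
      obtain ⟨rfl, h2⟩ := h
      have h3 : u' = -u := h2.symm
      subst h3
      have hy2 : f k (-u) - f k' (-u) = f k' u - f k u := by rw [f_neg, f_neg]; abel
      rw [hy2]
      by_cases hjj : j = k'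
      · subst hjj; left; abel
      · right; exact ⟨j, k', u, hu, hjj, by abel⟩
    · -- (k, -u) = (k', -u')
      rw [Prod.mk.injEq] at h
      obtain ⟨rfl, h2⟩ := h
      have h3 : u' = u := by rw [← neg_neg u', ← h2, neg_neg]
      rw [h3]
      by_cases hjj : j = j'
      · subst hjj; left; rfl
      · right; exact ⟨j, j', u, hu, hjj, by abel⟩


/-- Counting bound: a difference-free subset of `A m` has at most `2m+2` elements. -/
lemma no_large_free {m : ℕ} (B : Finset (Fin m → ℂ)) (hB : ↑B ⊆ A m)
    (hfree : ∀ u ∈ B, ∀ v ∈ B, u ≠ v → u - v ∉ A m) : B.card ≤ 2 * m + 2 := by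
  classical
  set U : Finset (Option (Fin m) × ℂ) := Finset.univ ×ˢ units with hU
  set P : Finset ((Fin m → ℂ) × (Option (Fin m) × ℂ)) :=
    (B ×ˢ U).filter (fun p => slotMem p.2 p.1) with hP
  have hPU : P.card ≤ U.card := by
    apply Finset.card_le_card_of_injOn (fun p => p.2)
    · intro p hp
      exact (Finset.mem_product.1 (Finset.mem_filter.1 hp).1).2
    · intro p hp q hq hpq
      have hpq' : p.2 = q.2 := hpq
      have hp' := Finset.mem_filter.1 hp
      have hq' := Finset.mem_filter.1 hq
      have hpB : p.1 ∈ B := (Finset.mem_product.1 hp'.1).1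
      have hqB : q.1 ∈ B := (Finset.mem_product.1 hq'.1).1
      have h1 : p.1 = q.1 := by
        rcases eq_or_sub_mem (hB hpB) (hB hqB) hp'.2 (hpq' ▸ hq'.2) with h | h
        · exact h
        · by_contra hne
          exact hfree _ hpB _ hqB hne h
      exact Prod.ext h1 hpq'
  have h2 : ∀ x ∈ B, 2 ≤ (P.filter (fun p => p.1 = x)).card := by
    intro x hx
    obtain ⟨s₁, s₂, h12, hs1u, hs2u, hm1, hm2⟩ := slots_exist (hB hx)
    have hmem : ∀ s : Option (Fin m) × ℂ, s.2 ∈ units → slotMem s x →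
        (x, s) ∈ P.filter (fun p => p.1 = x) := by
      intro s hsu hsm
      rw [Finset.mem_filter, hP, Finset.mem_filter, Finset.mem_product]
      exact ⟨⟨⟨hx, by rw [hU, Finset.mem_product]; exact ⟨Finset.mem_univ _, hsu⟩⟩, hsm⟩, rfl⟩
    have hne : ((x, s₁) : (Fin m → ℂ) × (Option (Fin m) × ℂ)) ≠ (x, s₂) := by
      intro h
      apply h12
      have := (Prod.mk.injEq _ _ _ _ ▸ h).2
      rw [this]
    have hsub : ({(x, s₁), (x, s₂)} : Finset ((Fin m → ℂ) × (Option (Fin m) × ℂ))) ⊆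
        P.filter (fun p => p.1 = x) := by
      intro p hp
      rcases Finset.mem_insert.1 hp with rfl | hp
      · exact hmem _ hs1u hm1
      · rw [Finset.mem_singleton] at hp
        subst hp
        exact hmem _ hs2u hm2
    have hcard : ({(x, s₁), (x, s₂)} : Finset ((Fin m → ℂ) × (Option (Fin m) × ℂ))).card = 2 := by
      rw [Finset.card_insert_of_notMem (by simpa using hne), Finset.card_singleton]
    exact hcard ▸ Finset.card_le_card hsub
  have hPB : B.card * 2 ≤ P.card := by
    have hfib : ∀ p ∈ P, p.1 ∈ B := by
      intro p hp
      exact (Finset.mem_product.1 (Finset.mem_filter.1 hp).1).1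
    rw [Finset.card_eq_sum_card_fiberwise hfib]
    calc B.card * 2 = ∑ _x ∈ B, 2 := by rw [Finset.sum_const, smul_eq_mul, Nat.mul_comm]
      _ ≤ ∑ x ∈ B, (P.filter fun p => p.1 = x).card := Finset.sum_le_sum h2
  have hUcard : U.card ≤ (m + 1) * 4 := by
    rw [hU, Finset.card_product, Finset.card_univ, Fintype.card_option, Fintype.card_fin]
    have h4 : units.card ≤ 4 := by
      unfold units
      refine le_trans (Finset.card_insert_le _ _) (Nat.succ_le_succ ?_)
      refine le_trans (Finset.card_insert_le _ _) (Nat.succ_le_succ ?_)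
      refine le_trans (Finset.card_insert_le _ _) (Nat.succ_le_succ ?_)
      exact le_of_eq (Finset.card_singleton _)
    exact Nat.mul_le_mul_left _ h4
  omega

end CKL


/-- **Lower bound in `K_ℂ(2n+1) = n` (Proposition 3.6).** For every `n > 1` there is a
subset `A` of `V_{n-1} = {0, ±1, ±i}^{n-1} ⊆ ℂ^{n-1}` containing all standard basis
vectors, closed under multiplication by `i`, such that every subset of `A` with `2n + 1`
elements contains two distinct elements whose difference lies in `A`; in particular `A`
admits no difference-free subset of cardinality `2n + 1`. -/
theorem complex_kottman_lower (n : ℕ) (hn : 1 < n) :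
    ∃ A : Set (Fin (n - 1) → ℂ),
      A ⊆ {v | ∀ t, v t ∈ ({0, 1, -1, Complex.I, -Complex.I} : Set ℂ)} ∧
      (∀ k : Fin (n - 1), Pi.single k (1 : ℂ) ∈ A) ∧
      (∀ v ∈ A, Complex.I • v ∈ A) ∧
      (∀ B : Finset (Fin (n - 1) → ℂ), ↑B ⊆ A → B.card = 2 * n + 1 →
        ∃ u ∈ B, ∃ v ∈ B, u ≠ v ∧ u - v ∈ A) ∧
      ¬∃ B : Finset (Fin (n - 1) → ℂ), ↑B ⊆ A ∧ B.card = 2 * n + 1 ∧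
        ∀ u ∈ B, ∀ v ∈ B, u ≠ v → u - v ∉ A := by

  refine ⟨CKL.A (n - 1), ?_, ?_, ?_, ?_, ?_⟩
  · rintro x ⟨j, k, u, hu, hjk, rfl⟩ t
    have hS : ∀ w : ℂ, w ∈ CKL.units → w ∈ ({0, 1, -1, Complex.I, -Complex.I} : Set ℂ) := by
      intro w hw
      rcases CKL.mem_units_iff.1 hw with h | h | h | h <;> subst h <;>
        simp [Set.mem_insert_iff]
    have : (CKL.f j u - CKL.f k u) t = (if j = some t then u else 0) -
        (if k = some t then u else 0) := by
      rw [Pi.sub_apply, CKL.f_apply, CKL.f_apply]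
    rw [this]
    split_ifs with h1 h2 h2
    · simp [Set.mem_insert_iff]
    · simpa using hS u hu
    · simpa using hS (-u) (CKL.neg_mem_units hu)
    · simp [Set.mem_insert_iff]
  · intro k
    refine ⟨some k, none, 1, by simp [CKL.mem_units_iff], by simp, ?_⟩
    ext t
    by_cases h : t = k
    · subst h; simp [CKL.f_apply]
    · simp [CKL.f_apply, Pi.single_apply, h, Ne.symm h]
  · rintro v ⟨j, k, u, hu, hjk, rfl⟩
    refine ⟨j, k, Complex.I * u, CKL.I_mul_mem_units hu, hjk, ?_⟩
    ext t
    simp only [Pi.smul_apply, Pi.sub_apply, CKL.f_apply, smul_eq_mul]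
    split_ifs <;> ring
  · intro B hB hcard
    by_contra hcon
    push_neg at hcon
    have hle := CKL.no_large_free B hB (by
      intro u hu v hv huv
      exact (hcon u hu v hv) huv)
    omega
  · rintro ⟨B, hB, hcard, hfree⟩
    have hle := CKL.no_large_free B hB hfree
    omega
end

section
/- (K_ℂ(2n+2) ≤ n.) For every n ≥ 1, if A is a subset of V_n = {0, 1, -1, i, -i}^n ⊆ ℂ^n such that (a) every standard basis vector e_k (1 ≤ k ≤ n) belongs to A, and (b) x ∈ A implies i·x ∈ A, then there exists a subset B of A with |B| = 2n+2 such that x - y ∉ A for all distinct x, y ∈ B (i.e., B is difference-free with respect to A). -/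
private noncomputable def ggK (z : ℂ) : ℝ := z.re + z.im / 2

private noncomputable def mfK (n : ℕ) (x : Fin n → ℂ) : ℝ := ∑ q : Fin n, (5:ℝ) ^ (q : ℕ) * ggK (x q)

private lemma ggK_sub (z w : ℂ) : ggK (z - w) = ggK z - ggK w := by
  simp [ggK, Complex.sub_re, Complex.sub_im]; ring

private lemma mfK_sub (n : ℕ) (x y : Fin n → ℂ) : mfK n (x - y) = mfK n x - mfK n y := by
  simp only [mfK, Pi.sub_apply, ggK_sub, mul_sub, Finset.sum_sub_distrib]

private lemma ggK_le_one {z : ℂ}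
    (hz : z ∈ ({0, 1, -1, Complex.I, -Complex.I} : Set ℂ)) : ggK z ≤ 1 := by
  simp only [Set.mem_insert_iff, Set.mem_singleton_iff] at hz
  rcases hz with rfl | rfl | rfl | rfl | rfl <;>
    norm_num [ggK, Complex.I_re, Complex.I_im, Complex.neg_re, Complex.neg_im]

private lemma mfK_neg_class {n : ℕ} (j : Fin n) (d : ℂ) (hd : d = -1 ∨ d = -Complex.I)
    (a : Fin n → ℂ) (hs : ∀ q, a q ∈ ({0, 1, -1, Complex.I, -Complex.I} : Set ℂ))
    (h0 : ∀ q, j < q → a q = 0) (hj : a j = d) : mfK n a < 0 := by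
  have h5 : (0:ℝ) < 5 ^ (j:ℕ) := by positivity
  have hterm : ∀ q ∈ Finset.univ.erase j,
      (5:ℝ) ^ (q:ℕ) * ggK (a q) ≤ (if (q:ℕ) < (j:ℕ) then (5:ℝ)^(q:ℕ) else 0) := by
    intro q hq
    have hqj : q ≠ j := Finset.ne_of_mem_erase hq
    by_cases hlt : (q:ℕ) < (j:ℕ)
    · simp only [hlt, if_true]
      have h1 := ggK_le_one (hs q)
      have h2 : (0:ℝ) < 5 ^ (q:ℕ) := by positivity
      nlinarith
    · have hvne : (q:ℕ) ≠ (j:ℕ) := fun h => hqj (Fin.ext h)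
      have hjq : j < q := by
        have : (j:ℕ) < (q:ℕ) := by omega
        exact this
      simp [hlt, h0 q hjq, ggK]
  have hsplit : mfK n a
      = (5:ℝ)^(j:ℕ) * ggK d + ∑ q ∈ Finset.univ.erase j, (5:ℝ)^(q:ℕ) * ggK (a q) := by
    rw [mfK, ← Finset.add_sum_erase _ _ (Finset.mem_univ j), hj]
  have hsum1 : ∑ q ∈ Finset.univ.erase j, (5:ℝ)^(q:ℕ) * ggK (a q)
      ≤ ∑ q ∈ Finset.univ.erase j, (if (q:ℕ) < (j:ℕ) then (5:ℝ)^(q:ℕ) else 0) :=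
    Finset.sum_le_sum hterm
  have hsum2 : ∑ q ∈ Finset.univ.erase j, (if (q:ℕ) < (j:ℕ) then (5:ℝ)^(q:ℕ) else 0)
      ≤ ∑ q : Fin n, (if (q:ℕ) < (j:ℕ) then (5:ℝ)^(q:ℕ) else 0) := by
    apply Finset.sum_le_sum_of_subset_of_nonneg (Finset.erase_subset _ _)
    intro q _ _
    split <;> positivity
  have hsum3 : ∑ q : Fin n, (if (q:ℕ) < (j:ℕ) then (5:ℝ)^(q:ℕ) else 0)
      = ∑ m ∈ Finset.range (j:ℕ), (5:ℝ)^m := by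
    rw [Fin.sum_univ_eq_sum_range (fun m => if m < (j:ℕ) then (5:ℝ)^m else 0) n]
    rw [← Finset.sum_filter]
    congr 1
    ext m
    simp only [Finset.mem_filter, Finset.mem_range]
    constructor
    · rintro ⟨_, h2⟩; exact h2
    · intro h; exact ⟨lt_of_lt_of_le h (le_of_lt j.isLt), h⟩
  have hgeom : ∑ m ∈ Finset.range (j:ℕ), (5:ℝ)^m = ((5:ℝ)^(j:ℕ) - 1)/4 := by
    rw [geom_sum_eq (by norm_num : (5:ℝ) ≠ 1)]
    norm_num
  have hgd : ggK d ≤ -(1/2) := by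
    rcases hd with rfl | rfl <;>
      norm_num [ggK, Complex.I_re, Complex.I_im, Complex.neg_re, Complex.neg_im]
  have : mfK n a ≤ (5:ℝ)^(j:ℕ) * ggK d + ((5:ℝ)^(j:ℕ) - 1)/4 := by
    rw [hsplit]
    have := hsum1.trans (hsum2.trans_eq (hsum3.trans hgeom))
    linarith
  nlinarith

private lemma kottmanUnitsNeZero {c : ℂ}
    (hc : c = 1 ∨ c = -1 ∨ c = Complex.I ∨ c = -Complex.I) : c ≠ 0 := by
  rcases hc with rfl | rfl | rfl | rfl <;>
    simp [Complex.ext_iff]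

private lemma kottmanNotBoth (b : ℂ) (h1 : b = 1 ∨ b = Complex.I)
    (h2 : b = -1 ∨ b = -Complex.I) : False := by
  rcases h1 with rfl | rfl <;> rcases h2 with h | h <;>
    rw [Complex.ext_iff] at h <;>
    simp only [Complex.one_re, Complex.one_im, Complex.I_re, Complex.I_im,
      Complex.neg_re, Complex.neg_im] at h <;> norm_num at h

private lemma kottmanUnitsSub {c d : ℂ}
    (hc : c = 1 ∨ c = -1 ∨ c = Complex.I ∨ c = -Complex.I)
    (hd : d = 1 ∨ d = -1 ∨ d = Complex.I ∨ d = -Complex.I)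
    (hne : c ≠ d) : c - d ∉ ({0, 1, -1, Complex.I, -Complex.I} : Set ℂ) := by
  intro h
  simp only [Set.mem_insert_iff, Set.mem_singleton_iff] at h
  rcases hc with rfl | rfl | rfl | rfl <;> rcases hd with rfl | rfl | rfl | rfl <;>
    rcases h with h | h | h | h | h <;>
      simp_all [Complex.ext_iff] <;> norm_num at h

/-- **`K_ℂ(2n+2) ≤ n` (Proposition 3.7 / Theorem 3.9).** For `n ≥ 1`, any subset `A` of
`V_n = {0, ±1, ±i}^n ⊆ ℂ^n` containing all standard basis vectors and closed under
multiplication by `i` admits a difference-free (w.r.t. `A`) subset of cardinality `2n+2`. -/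
theorem complex_kottman_even (n : ℕ) (hn : 1 ≤ n) (A : Set (Fin n → ℂ))
    (hcube : A ⊆ {v | ∀ t, v t ∈ ({0, 1, -1, Complex.I, -Complex.I} : Set ℂ)})
    (hbasis : ∀ k : Fin n, Pi.single k (1 : ℂ) ∈ A)
    (hI : ∀ v ∈ A, Complex.I • v ∈ A) :
    ∃ B : Finset (Fin n → ℂ), ↑B ⊆ A ∧ B.card = 2 * n + 2 ∧
      ∀ u ∈ B, ∀ v ∈ B, u ≠ v → u - v ∉ A := by
  classical
  -- A is closed under negation
  have hneg : ∀ v ∈ A, -v ∈ A := by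
    intro v hv
    have h2 := hI _ (hI _ hv)
    rwa [smul_smul, Complex.I_mul_I, neg_one_smul] at h2
  -- all unit multiples of basis vectors are in A
  have hU : ∀ (c : ℂ), (c = 1 ∨ c = -1 ∨ c = Complex.I ∨ c = -Complex.I) →
      ∀ k : Fin n, c • (Pi.single k (1:ℂ) : Fin n → ℂ) ∈ A := by
    intro c hc k
    rcases hc with rfl | rfl | rfl | rfl
    · simpa using hbasis k
    · rw [neg_one_smul]; exact hneg _ (hbasis k)
    · exact hI _ (hbasis k)
    · rw [neg_smul]; exact hneg _ (hI _ (hbasis k))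
  -- A is finite
  have hAfin : A.Finite := by
    have h1 : ({0, 1, -1, Complex.I, -Complex.I} : Set ℂ).Finite :=
      (Set.finite_singleton _).insert _ |>.insert _ |>.insert _ |>.insert _
    have h2 : {v : Fin n → ℂ | ∀ t, v t ∈ ({0, 1, -1, Complex.I, -Complex.I} : Set ℂ)}.Finite := by
      have h3 := Set.Finite.pi (fun _ : Fin n => h1)
      apply h3.subset
      intro v hv
      simp only [Set.mem_pi, Set.mem_univ, forall_true_left]
      exact fun i => hv i
    exact h2.subset hcube
  -- the classes
  set Cl : Fin n → ℂ → Set (Fin n → ℂ) :=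
    fun k c => {a | a ∈ A ∧ (∀ q, k < q → a q = 0) ∧ a k = c} with hCl
  have hClA : ∀ k c, Cl k c ⊆ A := fun k c a ha => ha.1
  have hClne : ∀ (k : Fin n) (c : ℂ), (c = 1 ∨ c = -1 ∨ c = Complex.I ∨ c = -Complex.I) →
      (c • (Pi.single k (1:ℂ) : Fin n → ℂ)) ∈ Cl k c := by
    intro k c hc
    refine ⟨hU c hc k, ?_, ?_⟩
    · intro q hq
      have hqk : q ≠ k := (ne_of_gt hq)
      simp [Pi.smul_apply, Pi.single_eq_of_ne hqk]
    · simp [Pi.smul_apply, Pi.single_eq_same]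
  have Hsel : ∀ (k : Fin n) (c : ℂ), (c = 1 ∨ c = -1 ∨ c = Complex.I ∨ c = -Complex.I) →
      ∃ x, x ∈ Cl k c ∧ ∀ y ∈ Cl k c, mfK n y ≤ mfK n x := by
    intro k c hc
    obtain ⟨x, hx, hmax⟩ :=
      Set.exists_max_image (Cl k c) (mfK n) (hAfin.subset (hClA k c)) ⟨_, hClne k c hc⟩
    exact ⟨x, hx, hmax⟩
  choose! sel hselmem hselmax using Hsel
  -- the choice set
  set last : Fin n := ⟨n - 1, by omega⟩ with hlast
  set Ch : Finset (Fin n × ℂ) :=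
    (Finset.univ ×ˢ ({-1, -Complex.I} : Finset ℂ)) ∪ {(last, 1), (last, Complex.I)} with hCh
  have hChU : ∀ p ∈ Ch, (p.2 = 1 ∨ p.2 = -1 ∨ p.2 = Complex.I ∨ p.2 = -Complex.I) := by
    intro p hp
    simp only [hCh, Finset.mem_union, Finset.mem_product, Finset.mem_insert,
      Finset.mem_singleton, Prod.ext_iff] at hp
    rcases hp with ⟨_, h | h⟩ | ⟨_, h⟩ | ⟨_, h⟩ <;> tauto
  have hlow : ∀ p ∈ Ch, p.1 ≠ last → (p.2 = -1 ∨ p.2 = -Complex.I) := by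
    intro p hp hne
    simp only [hCh, Finset.mem_union, Finset.mem_product, Finset.mem_insert,
      Finset.mem_singleton, Prod.ext_iff] at hp
    rcases hp with ⟨_, h | h⟩ | ⟨h, _⟩ | ⟨h, _⟩ <;> tauto
  have hk_le_last : ∀ k : Fin n, (k:ℕ) ≤ (last:ℕ) := by
    intro k
    have := k.isLt
    simp only [hlast]
    omega
  -- key cross-class lemma
  have CROSS : ∀ (k : Fin n) (c : ℂ) (j : Fin n) (d : ℂ),
      (k,c) ∈ Ch → (j,d) ∈ Ch → j < k → sel k c - sel j d ∉ A := by
    intro k c j d hk hj hjk hmem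
    have hcU := hChU _ hk
    have hdU := hChU _ hj
    have hxC := hselmem k c hcU
    have hyC := hselmem j d hdU
    have hz : (sel k c - sel j d) ∈ Cl k c := by
      refine ⟨hmem, ?_, ?_⟩
      · intro q hq
        have h1 : sel k c q = 0 := hxC.2.1 q hq
        have h2 : sel j d q = 0 := hyC.2.1 q (lt_trans hjk hq)
        simp [Pi.sub_apply, h1, h2]
      · have h2 : sel j d k = 0 := hyC.2.1 k hjk
        simp [Pi.sub_apply, hxC.2.2, h2]
    have hmax := hselmax k c hcU _ hz
    rw [mfK_sub] at hmax
    have hdneg : d = -1 ∨ d = -Complex.I := by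
      apply hlow (j,d) hj
      intro hjeq
      have h1 : (j:ℕ) = (last:ℕ) := congrArg Fin.val hjeq
      have h2 : (j:ℕ) < (k:ℕ) := hjk
      have h3 := hk_le_last k
      omega
    have hyneg : mfK n (sel j d) < 0 :=
      mfK_neg_class j d hdneg (sel j d)
        (fun q => hcube (hClA _ _ hyC) q) hyC.2.1 hyC.2.2
    linarith
  -- the witness set
  refine ⟨Ch.image (fun p => sel p.1 p.2), ?_, ?_, ?_⟩
  · intro x hx
    simp only [Finset.coe_image, Set.mem_image, Finset.mem_coe] at hx
    obtain ⟨p, hp, rfl⟩ := hx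
    exact hClA _ _ (hselmem p.1 p.2 (hChU p hp))
  · -- cardinality
    have hinj : Set.InjOn (fun p : Fin n × ℂ => sel p.1 p.2) Ch := by
      rintro ⟨k, c⟩ hk ⟨j, d⟩ hj h
      simp only at h
      have hcU := hChU _ hk
      have hdU := hChU _ hj
      have hxC := hselmem k c hcU
      have hyC := hselmem j d hdU
      rcases lt_trichotomy j k with hlt | heq | hlt
      · exfalso
        have h1 : sel k c k = c := hxC.2.2
        have h2 : sel j d k = 0 := hyC.2.1 k hlt
        rw [h] at h1
        exact kottmanUnitsNeZero hcU (h2 ▸ h1.symm)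
      · subst heq
        have h1 : sel j c j = c := hxC.2.2
        have h2 : sel j d j = d := hyC.2.2
        rw [h] at h1
        have hcd : c = d := h1.symm.trans h2
        exact Prod.ext rfl hcd
      · exfalso
        have h1 : sel j d j = d := hyC.2.2
        have h2 : sel k c j = 0 := hxC.2.1 j hlt
        rw [← h] at h1
        exact kottmanUnitsNeZero hdU (h2 ▸ h1.symm)
    rw [Finset.card_image_of_injOn hinj]
    have hone_ne_I : (1:ℂ) ≠ Complex.I := by
      simp [Complex.ext_iff]
    have hdisj : Disjoint (Finset.univ ×ˢ ({-1, -Complex.I} : Finset ℂ))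
        ({(last, 1), (last, Complex.I)} : Finset (Fin n × ℂ)) := by
      rw [Finset.disjoint_right]
      rintro ⟨a, b⟩ hp hq
      simp only [Finset.mem_insert, Finset.mem_singleton, Prod.ext_iff] at hp
      simp only [Finset.mem_product, Finset.mem_insert, Finset.mem_singleton] at hq
      have h1 : b = 1 ∨ b = Complex.I := by tauto
      exact kottmanNotBoth b h1 hq.2
    rw [hCh, Finset.card_union_of_disjoint hdisj]
    have h1 : ({-1, -Complex.I} : Finset ℂ).card = 2 := by
      rw [Finset.card_insert_of_notMem, Finset.card_singleton]
      simp [Complex.ext_iff]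
    have h2 : ({(last, 1), (last, Complex.I)} : Finset (Fin n × ℂ)).card = 2 := by
      rw [Finset.card_insert_of_notMem, Finset.card_singleton]
      simp only [Finset.mem_singleton, Prod.ext_iff, not_and]
      intro _
      simp [Complex.ext_iff]
    rw [Finset.card_product, Finset.card_univ, Fintype.card_fin, h1, h2]
    ring
  · -- difference-free
    intro u hu v hv huv hmem
    simp only [Finset.mem_image] at hu hv
    obtain ⟨⟨k, c⟩, hkc, rfl⟩ := hu
    obtain ⟨⟨j, d⟩, hjd, rfl⟩ := hv
    rcases lt_trichotomy j k with hlt | heq | hlt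
    · exact CROSS k c j d hkc hjd hlt hmem
    · -- same class: top coordinate difference is not in the cube
      subst heq
      have hcd : c ≠ d := by
        intro h
        exact huv (by rw [h])
      have hcU := hChU _ hkc
      have hdU := hChU _ hjd
      have h1 := hcube hmem j
      have h2 : (sel j c - sel j d) j = c - d := by
        have ha : sel j c j = c := (hselmem j c hcU).2.2
        have hb : sel j d j = d := (hselmem j d hdU).2.2
        simp [Pi.sub_apply, ha, hb]
      rw [h2] at h1
      exact kottmanUnitsSub hcU hdU hcd h1
    · have hmem' : sel j d - sel k c ∈ A := by
        have := hneg _ hmem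
        rwa [neg_sub] at this
      exact CROSS j d k c hjd hkc hlt hmem'
end

section
/- Let Γ be an infinite set (equipped with the discrete topology) and let c₀(Γ) denote the Banach space of real-valued functions on Γ vanishing at infinity, with the supremum norm. If S is a set of finitely supported elements of c₀(Γ) with ‖x‖ = 1 for every x ∈ S and ‖x - y‖ > 1 for all distinct x, y ∈ S, then S is countable. -/
open ZeroAtInfty

private lemma key_lemma {Γ : Type*} (n : ℕ) :
    ∀ (T : Set (Γ → ℝ)), ¬ T.Countable →
    (∀ x ∈ T, (Function.support x).Finite) →
    (∀ x ∈ T, ∀ γ, |x γ| ≤ 1) →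
    (∀ x ∈ T, (Function.support x).ncard ≤ n) →
    ∃ x ∈ T, ∃ y ∈ T, x ≠ y ∧ ∀ γ, |x γ - y γ| ≤ 1 := by
  classical
  induction n with
  | zero =>
    intro T hT hfin _ hcard
    exfalso
    apply hT
    have : T ⊆ {0} := by
      intro x hx
      have h0 : Function.support x = ∅ := by
        have := hcard x hx
        have hf := hfin x hx
        simpa [Set.ncard_eq_zero hf] using this
      simpa [Set.mem_singleton_iff, Function.support_eq_empty_iff] using h0
    exact (Set.countable_singleton 0).mono this
  | succ n ih =>
    intro T hT hfin hbd hcard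
    by_cases hA : ∃ γ₀, ¬ {x ∈ T | x γ₀ ≠ 0}.Countable
    · obtain ⟨γ₀, hγ₀⟩ := hA
      -- split by sign at γ₀
      have hsplit : ¬ {x ∈ T | 0 < x γ₀}.Countable ∨ ¬ {x ∈ T | x γ₀ < 0}.Countable := by
        by_contra h
        push_neg at h
        apply hγ₀
        refine (h.1.union h.2).mono ?_
        intro x hx
        rcases hx with ⟨hxT, hxne⟩
        rcases lt_or_gt_of_ne hxne with h1 | h1
        · exact Or.inr ⟨hxT, h1⟩
        · exact Or.inl ⟨hxT, h1⟩
      -- handle both signs uniformly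
      have main : ∀ (V : Set (Γ → ℝ)), ¬ V.Countable → V ⊆ T →
          (∀ x ∈ V, x γ₀ ≠ 0) →
          (∀ x ∈ V, ∀ y ∈ V, |x γ₀ - y γ₀| ≤ 1) →
          ∃ x ∈ T, ∃ y ∈ T, x ≠ y ∧ ∀ γ, |x γ - y γ| ≤ 1 := by
        intro V hV hVT hne hclose
        set φ : (Γ → ℝ) → (Γ → ℝ) := fun x => Function.update x γ₀ 0 with hφ
        by_cases hinj : ∃ x ∈ V, ∃ y ∈ V, x ≠ y ∧ φ x = φ y
        · obtain ⟨x, hx, y, hy, hxy, heq⟩ := hinj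
          refine ⟨x, hVT hx, y, hVT hy, hxy, fun γ => ?_⟩
          by_cases hγ : γ = γ₀
          · subst hγ; exact hclose x hx y hy
          · have : φ x γ = φ y γ := by rw [heq]
            simp only [hφ, Function.update_of_ne hγ] at this
            simp [this]
        · push_neg at hinj
          have hinjOn : Set.InjOn φ V := by
            intro x hx y hy heq
            by_contra hne'
            exact hinj x hx y hy hne' heq
          have hV' : ¬ (φ '' V).Countable := by
            intro hc
            exact hV ((Set.mapsTo_image φ V).countable_of_injOn hinjOn hc)
          have hsupp : ∀ x ∈ V, Function.support (φ x) = Function.support x \ {γ₀} := by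
            intro x hx
            ext γ
            by_cases hγ : γ = γ₀
            · subst hγ; simp [hφ]
            · simp [hφ, Function.update_of_ne hγ, hγ]
          obtain ⟨x', hx', y', hy', hne', hle⟩ :=
            ih (φ '' V) hV'
              (by rintro _ ⟨x, hx, rfl⟩
                  rw [hsupp x hx]
                  exact (hfin x (hVT hx)).subset Set.diff_subset)
              (by rintro _ ⟨x, hx, rfl⟩ γ
                  by_cases hγ : γ = γ₀
                  · subst hγ; simp [hφ]
                  · simpa [hφ, Function.update_of_ne hγ] using hbd x (hVT hx) γ)
              (by rintro _ ⟨x, hx, rfl⟩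
                  rw [hsupp x hx]
                  have hmem : γ₀ ∈ Function.support x := hne x hx
                  have hfx := hfin x (hVT hx)
                  have h1 : (Function.support x \ {γ₀}).ncard + 1 =
                      (Function.support x).ncard :=
                    Set.ncard_diff_singleton_add_one hmem hfx
                  have h2 := hcard x (hVT hx)
                  omega)
          obtain ⟨x, hx, rfl⟩ := hx'
          obtain ⟨y, hy, rfl⟩ := hy'
          refine ⟨x, hVT hx, y, hVT hy, fun h => hne' (by rw [h]), fun γ => ?_⟩
          by_cases hγ : γ = γ₀
          · subst hγ; exact hclose x hx y hy
          · have := hle γ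
            simpa [hφ, Function.update_of_ne hγ] using this
      rcases hsplit with h | h
      · refine main _ h (Set.sep_subset _ _) (fun x hx => ne_of_gt hx.2) ?_
        intro x hx y hy
        have hx1 := hbd x hx.1 γ₀
        have hy1 := hbd y hy.1 γ₀
        rw [abs_le] at hx1 hy1 ⊢
        constructor <;> nlinarith [hx.2, hy.2]
      · refine main _ h (Set.sep_subset _ _) (fun x hx => ne_of_lt hx.2) ?_
        intro x hx y hy
        have hx1 := hbd x hx.1 γ₀
        have hy1 := hbd y hy.1 γ₀
        rw [abs_le] at hx1 hy1 ⊢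
        constructor <;> nlinarith [hx.2, hy.2]
    · push_neg at hA
      have hTne : T.Nonempty := by
        by_contra h
        exact hT (by simp [Set.not_nonempty_iff_eq_empty.mp h])
      obtain ⟨x₀, hx₀⟩ := hTne
      have hW : (⋃ γ ∈ Function.support x₀, {x ∈ T | x γ ≠ 0}).Countable :=
        Set.Countable.biUnion (hfin x₀ hx₀).countable (fun γ _ => hA γ)
      have : ¬ (T \ ((⋃ γ ∈ Function.support x₀, {x ∈ T | x γ ≠ 0}) ∪ {x₀})).Countable := by
        intro hc
        apply hT
        have : T ⊆ (T \ ((⋃ γ ∈ Function.support x₀, {x ∈ T | x γ ≠ 0}) ∪ {x₀})) ∪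
            ((⋃ γ ∈ Function.support x₀, {x ∈ T | x γ ≠ 0}) ∪ {x₀}) := by
          intro x hx
          by_cases h : x ∈ (⋃ γ ∈ Function.support x₀, {x ∈ T | x γ ≠ 0}) ∪ {x₀}
          · exact Or.inr h
          · exact Or.inl ⟨hx, h⟩
        exact (hc.union (hW.union (Set.countable_singleton x₀))).mono this
      have hne2 : (T \ ((⋃ γ ∈ Function.support x₀, {x ∈ T | x γ ≠ 0}) ∪ {x₀})).Nonempty := by
        rw [Set.nonempty_iff_ne_empty]
        intro h
        rw [h] at this
        exact this Set.countable_empty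
      obtain ⟨y, hyT, hynot⟩ := hne2
      have hyne : y ≠ x₀ := fun h => hynot (Or.inr (by simp [h]))
      refine ⟨x₀, hx₀, y, hyT, hyne.symm, fun γ => ?_⟩
      by_cases hγ : γ ∈ Function.support x₀
      · have : y γ = 0 := by
          by_contra h
          exact hynot (Or.inl (Set.mem_biUnion hγ ⟨hyT, h⟩))
        simpa [this] using hbd x₀ hx₀ γ
      · have : x₀ γ = 0 := by simpa [Function.mem_support, not_not] using hγ
        simpa [this] using hbd y hyT γ

/-- **Remark (2), first part.** If `Γ` is an infinite discrete space and `S` is a set of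
finitely supported norm-one elements of `c₀(Γ)` any two of which are separated by more
than `1`, then `S` is countable. -/
theorem c0_separated_countable (Γ : Type*) [TopologicalSpace Γ] [DiscreteTopology Γ]
    [Infinite Γ] (S : Set C₀(Γ, ℝ))
    (hfin : ∀ x ∈ S, (Function.support (⇑x)).Finite)
    (hnorm : ∀ x ∈ S, ‖x‖ = 1)
    (hsep : ∀ x ∈ S, ∀ y ∈ S, x ≠ y → ‖x - y‖ > 1) :
    S.Countable := by
  by_contra hS
  -- pass to image in function space
  set T : Set (Γ → ℝ) := (fun f : C₀(Γ, ℝ) => ⇑f) '' S with hTdef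
  have hcoe_inj : Function.Injective (fun f : C₀(Γ, ℝ) => ⇑f) := DFunLike.coe_injective
  have hT : ¬ T.Countable := by
    intro hc
    exact hS ((Set.mapsTo_image _ S).countable_of_injOn hcoe_inj.injOn hc)
  -- pigeonhole on support cardinality
  have hcover : T ⊆ ⋃ n : ℕ, {f ∈ T | (Function.support f).ncard = n} := by
    intro f hf
    exact Set.mem_iUnion.mpr ⟨(Function.support f).ncard, hf, rfl⟩
  have : ∃ n : ℕ, ¬ {f ∈ T | (Function.support f).ncard = n}.Countable := by
    by_contra h
    push_neg at h
    exact hT ((Set.countable_iUnion h).mono hcover)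
  obtain ⟨n, hn⟩ := this
  have hbd : ∀ x ∈ S, ∀ γ, |(x : Γ → ℝ) γ| ≤ 1 := by
    intro x hx γ
    have h1 : ‖x γ‖ ≤ ‖x.toBCF‖ := x.toBCF.norm_coe_le_norm γ
    rw [ZeroAtInftyContinuousMap.norm_toBCF_eq_norm, hnorm x hx] at h1
    simpa using h1
  obtain ⟨f, hf, g, hg, hfg, hle⟩ :=
    key_lemma n {f ∈ T | (Function.support f).ncard = n} hn
      (by rintro f ⟨⟨x, hx, rfl⟩, -⟩; exact hfin x hx)
      (by rintro f ⟨⟨x, hx, rfl⟩, -⟩; exact hbd x hx)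
      (by rintro f ⟨-, h2⟩; exact le_of_eq h2)
  obtain ⟨⟨x, hx, rfl⟩, -⟩ := hf
  obtain ⟨⟨y, hy, rfl⟩, -⟩ := hg
  have hxy : x ≠ y := fun h => hfg (by rw [h])
  have hnle : ‖x - y‖ ≤ 1 := by
    rw [← ZeroAtInftyContinuousMap.norm_toBCF_eq_norm]
    refine BoundedContinuousFunction.norm_le (by norm_num) |>.mpr fun γ => ?_
    simpa using hle γ
  exact absurd (hsep x hx y hy hxy) (not_lt.mpr hnle)
end

section
/- Let Γ be an uncountable set (equipped with the discrete topology) and let c₀(Γ) denote the Banach space of real-valued functions on Γ vanishing at infinity, with the supremum norm. Then there exists a family {x_α : α < ω₁} of elements of c₀(Γ), indexed by the first uncountable ordinal (equivalently, a subset of cardinality ℵ₁), such that ‖x_α‖ = 1 for every α and ‖x_α - x_β‖ > 1 for all α ≠ β. -/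
open ZeroAtInfty Cardinal Set Filter Function

/-- **Remark (2), second part.** If `Γ` is an uncountable discrete space, then the unit
sphere of `c₀(Γ)` contains a family of cardinality `ℵ₁` any two members of which are
separated by more than `1`. -/
theorem c0_uncountable_separated (Γ : Type*) [TopologicalSpace Γ] [DiscreteTopology Γ]
    [Uncountable Γ] :
    ∃ S : Set C₀(Γ, ℝ), Cardinal.mk S = Cardinal.aleph 1 ∧
      (∀ x ∈ S, ‖x‖ = 1) ∧
      (∀ x ∈ S, ∀ y ∈ S, x ≠ y → ‖x - y‖ > 1) := by
  classical
  set I := (Cardinal.aleph 1).ord.ToType with hI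
  obtain ⟨ι⟩ : Nonempty (I ↪ Γ) := by
    rw [← Cardinal.le_def, Cardinal.mk_ord_toType, ← Cardinal.succ_aleph0]
    exact Order.succ_le_of_lt Cardinal.aleph0_lt_mk
  have hcount : ∀ i : I, ∃ e : (Set.Iio i) → ℕ, Function.Injective e := fun i =>
    Set.countable_iff_exists_injective.mp
      ((Cardinal.countable_iff_lt_aleph_one _).mpr (Cardinal.mk_Iio_ord_toType i))
  choose e he using hcount
  -- values on the index type
  set f : I → I → ℝ := fun i j =>
    if h : j < i then -(1/2 : ℝ) ^ (e i ⟨j, h⟩ + 1) else if j = i then 1 else 0 with hf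
  have hfii : ∀ i, f i i = 1 := fun i => by simp [hf]
  have hflt : ∀ {i j} (h : j < i), f i j = -(1/2 : ℝ) ^ (e i ⟨j, h⟩ + 1) := fun {i j} h => by
    simp [hf, h]
  have hfabs : ∀ i j, |f i j| ≤ 1 := by
    intro i j
    by_cases h : j < i
    · rw [hflt h, abs_neg, abs_pow]
      calc |(1/2 : ℝ)| ^ (e i ⟨j, h⟩ + 1) ≤ 1 ^ (e i ⟨j, h⟩ + 1) := by
            gcongr; rw [abs_of_nonneg] <;> norm_num
        _ = 1 := one_pow _
    · by_cases h' : j = i <;> simp [hf, h, h']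
  -- extension to Γ
  set g : I → Γ → ℝ := fun i => Function.extend ι (f i) 0 with hg
  have hgι : ∀ i j, g i (ι j) = f i j := fun i j => ι.injective.extend_apply _ _ _
  have hgabs : ∀ i γ, |g i γ| ≤ 1 := by
    intro i γ
    by_cases h : ∃ j, ι j = γ
    · obtain ⟨j, rfl⟩ := h; rw [hgι]; exact hfabs i j
    · rw [hg]; simp only [Function.extend_apply' _ _ _ h, Pi.zero_apply, abs_zero]; norm_num
  -- zero at infinity
  have hzero : ∀ i, Tendsto (g i) (cocompact Γ) (nhds 0) := by
    intro i
    rw [Metric.tendsto_nhds]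
    intro ε hε
    obtain ⟨N, hN⟩ := exists_pow_lt_of_lt_one hε (by norm_num : (1/2 : ℝ) < 1)
    set A : Set I := {i} ∪ (Subtype.val '' (e i ⁻¹' Set.Iio N)) with hA
    have hAfin : A.Finite := by
      refine (Set.finite_singleton i).union (Set.Finite.image _ ?_)
      exact Set.Finite.preimage (he i).injOn (Set.finite_Iio N)
    have hK : IsCompact (ι '' A) := (hAfin.image ι).isCompact
    rw [(Filter.hasBasis_cocompact).eventually_iff]
    refine ⟨ι '' A, hK, fun γ hγ => ?_⟩
    rw [Real.dist_eq, sub_zero]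
    by_cases h : ∃ j, ι j = γ
    · obtain ⟨j, rfl⟩ := h
      have hjA : j ∉ A := fun hj => hγ (Set.mem_image_of_mem ι hj)
      rw [hgι]
      by_cases hji : j < i
      · have hN' : N ≤ e i ⟨j, hji⟩ := by
          by_contra hc
          exact hjA (Or.inr ⟨⟨j, hji⟩, by simpa using Nat.lt_of_not_le hc, rfl⟩)
        rw [hflt hji, abs_neg, abs_pow]
        calc |(1/2 : ℝ)| ^ (e i ⟨j, hji⟩ + 1) ≤ |(1/2 : ℝ)| ^ N := by
              apply pow_le_pow_of_le_one (abs_nonneg _) (by rw [abs_of_nonneg] <;> norm_num)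
              omega
          _ = (1/2 : ℝ) ^ N := by rw [abs_of_nonneg]; norm_num
          _ < ε := hN
      · have hji' : j ≠ i := fun hji' => hjA (Or.inl hji')
        simp only [hf, hji, hji', dite_false, if_false, dif_neg, abs_zero]
        exact hε
    · rw [hg]; simp only [Function.extend_apply' _ _ _ h, Pi.zero_apply, abs_zero]; exact hε
  -- the C₀ functions
  set X : I → C₀(Γ, ℝ) := fun i => ⟨⟨g i, continuous_of_discreteTopology⟩, hzero i⟩ with hX
  have hXapp : ∀ i γ, X i γ = g i γ := fun i γ => rfl
  have hnorm : ∀ i, ‖X i‖ = 1 := by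
    intro i
    have h1 : ‖X i‖ ≤ 1 := by
      rw [← ZeroAtInftyContinuousMap.norm_toBCF_eq_norm]
      exact (BoundedContinuousFunction.norm_le zero_le_one).mpr fun γ => by
        have : (X i).toBCF γ = g i γ := rfl
        rw [this]; simpa [Real.norm_eq_abs] using hgabs i γ
    have h2 : (1 : ℝ) ≤ ‖X i‖ := by
      rw [← ZeroAtInftyContinuousMap.norm_toBCF_eq_norm]
      have h3 := (X i).toBCF.norm_coe_le_norm (ι i)
      have h4 : (X i).toBCF (ι i) = g i (ι i) := rfl
      rw [h4, hgι, hfii] at h3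
      simpa using h3
    linarith
  -- separation
  have hsep : ∀ i j : I, j < i → ‖X i - X j‖ > 1 := by
    intro i j hji
    have key : ‖(X i - X j) (ι j)‖ ≤ ‖X i - X j‖ := by
      rw [← ZeroAtInftyContinuousMap.norm_toBCF_eq_norm]
      have h3 := (X i - X j).toBCF.norm_coe_le_norm (ι j)
      have h4 : (X i - X j).toBCF (ι j) = (X i - X j) (ι j) := rfl
      rwa [h4] at h3
    have hval : (X i - X j) (ι j) = -(1/2 : ℝ) ^ (e i ⟨j, hji⟩ + 1) - 1 := by
      rw [ZeroAtInftyContinuousMap.sub_apply, hXapp, hXapp, hgι, hgι, hflt hji, hfii]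
    rw [hval, Real.norm_eq_abs] at key
    have hpos : (0 : ℝ) < (1/2 : ℝ) ^ (e i ⟨j, hji⟩ + 1) := by positivity
    rw [abs_of_nonpos (by linarith)] at key
    linarith
  have hsep' : ∀ i j : I, i ≠ j → ‖X i - X j‖ > 1 := by
    intro i j hij
    rcases lt_or_gt_of_ne hij with h | h
    · rw [← norm_neg, neg_sub]; exact hsep j i h
    · exact hsep i j h
  have hinj : Function.Injective X := by
    intro i j hij
    by_contra hne
    have := hsep' i j hne
    rw [hij, sub_self, norm_zero] at this
    linarith
  refine ⟨Set.range X, ?_, ?_, ?_⟩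
  · rw [Cardinal.mk_range_eq X hinj, hI, Cardinal.mk_ord_toType]
  · rintro x ⟨i, rfl⟩; exact hnorm i
  · rintro x ⟨i, rfl⟩ y ⟨j, rfl⟩ hxy
    exact hsep' i j fun h => hxy (by rw [h])
end
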